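/- If a_τ < 0 and τ_cp ≤ τ_u, then aᵀg > 0 and −ρ(τ_u) ≥ (1 + ε₀)·(aᵀg)/(2ε₀‖a‖²); in particular −ρ(τ_u) > 0. -/

import Mathlib

/-!
Positive definiteness gives `aᵀBa > 0`, so `a_τ < 0` forces `aᵀg > 0`, and `τ_cp ≤ τ_u` rewrites
as `(1 + ε₀) aᵀBa ≤ ε₀ ‖a‖² aᵀg`. At `τ_u` the denominator `1 - τ‖a‖²` equals `-ε₀`, and
`-ρ(τ_u) - (1 + ε₀) aᵀg / (2 ε₀ ‖a‖²)` is a positive multiple of `ε₀ ‖a‖² aᵀg - (1 + ε₀) aᵀBa`.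
-/

open scoped RealInnerProductSpace

theorem Matrix.PosDef.inner_toEuclideanLin_self_pos {ι : Type*} [Fintype ι] [DecidableEq ι]
    {B : Matrix ι ι ℝ} (hB : B.PosDef) {a : EuclideanSpace ℝ ι} (ha : a ≠ 0) :
    0 < ⟪a, Matrix.toEuclideanLin B a⟫ := by
  have hB' := hB.dotProduct_mulVec_pos (x := WithLp.ofLp a) (by simpa using ha)
  rw [EuclideanSpace.inner_eq_star_dotProduct, Matrix.toLpLin_apply, dotProduct_comm]
  simpa using hB'

/-- `ρ` with `p = aᵀg`, `q = aᵀBa` and `s = ‖a‖²`. -/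
noncomputable def rankOneModel (p q s τ : ℝ) : ℝ :=
  τ * p / (1 - τ * s) + τ ^ 2 * q / (2 * (1 - τ * s) ^ 2)

theorem neg_rankOneModel_one_add_div {p q s ε : ℝ} (hs : s ≠ 0) (hε : ε ≠ 0) :
    -rankOneModel p q s ((1 + ε) / s)
      = (1 + ε) * p / (2 * ε * s) + (1 + ε) * (ε * s * p - (1 + ε) * q) / (2 * ε ^ 2 * s ^ 2) := by
  have hden : 1 - (1 + ε) / s * s = -ε := by field_simp; ring
  rw [rankOneModel, hden]
  field_simp
  ring

theorem le_neg_rankOneModel_one_add_div {p q s ε : ℝ} (hs : 0 < s) (hε : 0 < ε)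
    (h : (1 + ε) * q ≤ ε * s * p) :
    (1 + ε) * p / (2 * ε * s) ≤ -rankOneModel p q s ((1 + ε) / s) := by
  rw [neg_rankOneModel_one_add_div hs.ne' hε.ne']
  have : 0 ≤ ε * s * p - (1 + ε) * q := by linarith
  have : 0 ≤ (1 + ε) * (ε * s * p - (1 + ε) * q) / (2 * ε ^ 2 * s ^ 2) := by positivity
  linarith

theorem neg_div_sub_le_one_add_div_iff {p q s ε : ℝ} (hs : 0 < s) (hneg : q - s * p < 0) :
    -p / (q - s * p) ≤ (1 + ε) / s ↔ (1 + ε) * q ≤ ε * s * p := by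
  rw [← neg_div_neg_eq, neg_neg, neg_sub, div_le_div_iff₀ (by linarith) hs]
  constructor <;> intro h <;> linarith

theorem stmt_17 {{n : ℕ}} (hn : 1 ≤ n)
    (a g : EuclideanSpace ℝ (Fin n)) (ha : a ≠ 0)
    (B : Matrix (Fin n) (Fin n) ℝ) (hBs : B.IsSymm) (hBpd : B.PosDef)
    (ρ : ℝ → ℝ)
    (hρ : ∀ τ : ℝ, τ ≠ 1 / ‖a‖ ^ 2 →
      ρ τ = τ * ⟪a, g⟫ / (1 - τ * ‖a‖ ^ 2)
        + τ ^ 2 * ⟪a, Matrix.toEuclideanLin B a⟫ / (2 * (1 - τ * ‖a‖ ^ 2) ^ 2))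
    (aτ τm : ℝ)
    (haτ : aτ = ⟪a, Matrix.toEuclideanLin B a⟫ - ‖a‖ ^ 2 * ⟪a, g⟫)
    (hτm : τm = 1 / ‖a‖ ^ 2)
    (τcp : ℝ) (hτcp : aτ ≠ 0 → τcp = -⟪a, g⟫ / aτ)
    (ε₀ : ℝ) (hε₀ : 0 < ε₀) (hε₁ : ε₀ < 1)
    (τd τu : ℝ) (hτd : τd = (1 - ε₀) / ‖a‖ ^ 2) (hτu : τu = (1 + ε₀) / ‖a‖ ^ 2)
    (haτneg : aτ < 0) (hle : τcp ≤ τu) :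
    0 < ⟪a, g⟫ ∧ -ρ τu ≥ (1 + ε₀) * ⟪a, g⟫ / (2 * ε₀ * ‖a‖ ^ 2) ∧ 0 < -ρ τu := by
  have hs : 0 < ‖a‖ ^ 2 := by positivity
  have hq := hBpd.inner_toEuclideanLin_self_pos ha
  have hp : 0 < ⟪a, g⟫ := pos_of_mul_pos_right (by linarith) hs.le
  have hτu_ne : τu ≠ 1 / ‖a‖ ^ 2 := by
    rw [hτu]
    exact fun h => hε₀.ne' (by linarith [(div_left_inj' hs.ne').mp h])
  have hρu : ρ τu = rankOneModel ⟪a, g⟫ ⟪a, Matrix.toEuclideanLin B a⟫ (‖a‖ ^ 2) τu :=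
    hρ τu hτu_ne
  subst haτ hτu
  rw [hτcp haτneg.ne, neg_div_sub_le_one_add_div_iff hs haτneg] at hle
  have hbound := le_neg_rankOneModel_one_add_div hs hε₀ hle
  rw [← hρu] at hbound
  exact ⟨hp, hbound, lt_of_lt_of_le (by positivity) hbound⟩
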